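/- arXiv:0902.4619 — 2 statements merged into one kernel-verified Lean document; each statement's English description precedes it below -/
import Mathlib

section
/- Let n ≥ 1 and let β be a real symmetric n×n matrix. Let F be a ℂ-valued function on the complex vector space of symmetric n×n complex matrices which is holomorphic (complex differentiable) on the Siegel upper half space 𝓗_n, and suppose that F(τ + u) = exp(2πi·tr(βu))·F(τ) for every τ ∈ 𝓗_n and every real symmetric n×n matrix u. Then there exists a constant c ∈ ℂ such that F(τ) = c·exp(2πi·tr(βτ)) for all τ ∈ 𝓗_n. -/
/-! Put `G τ = F τ * exp (-2πi tr(βτ))`. It is holomorphic on `𝓗_n` and invariant under real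
symmetric translations, so at every point its derivative kills the real symmetric matrices, hence
by `ℂ`-linearity all symmetric matrices, among them every difference of two points of `𝓗_n`.
Since `𝓗_n` is convex, `G` is constant on it. -/

open Complex MeasureTheory

attribute [local instance] Matrix.normedAddCommGroup Matrix.normedSpace

section Calculus

variable {𝕜 E F : Type*} [NontriviallyNormedField 𝕜] [NormedAddCommGroup E] [NormedSpace 𝕜 E]
  [NormedAddCommGroup F] [NormedSpace 𝕜 F]

theorem HasFDerivWithinAt.apply_eq_zero_of_forall_add_smul_eq {G : E → F} {L : E →L[𝕜] F}
    {s : Set E} {x u : E} (hG : HasFDerivWithinAt G L s x) (hs : ∀ t : 𝕜, x + t • u ∈ s)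
    (hinv : ∀ t : 𝕜, G (x + t • u) = G x) : L u = 0 := by
  have hline : HasDerivAt (fun t : 𝕜 => x + t • u) u 0 := by
    simpa using ((hasDerivAt_id (0 : 𝕜)).smul_const u).const_add x
  have h := hG.comp_hasDerivAt_of_eq 0 hline (.of_forall hs) (by simp)
  rw [show G ∘ (fun t : 𝕜 => x + t • u) = fun _ => G x from funext hinv] at h
  exact h.unique (hasDerivAt_const 0 (G x))

theorem HasFDerivWithinAt.zero_of_forall_apply_sub_eq_zero {G : E → F} {L : E →L[𝕜] F}
    {s : Set E} {x : E} (hG : HasFDerivWithinAt G L s x) (hL : ∀ y ∈ s, L (y - x) = 0) :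
    HasFDerivWithinAt G (0 : E →L[𝕜] F) s x := by
  refine .of_isLittleO (hG.isLittleO.congr' ?_ .rfl)
  filter_upwards [self_mem_nhdsWithin] with y hy
  simp [hL y hy]

end Calculus

theorem Convex.eq_of_hasFDerivWithinAt_of_apply_sub_eq_zero {𝕜 E F : Type*}
    [NontriviallyNormedField 𝕜] [IsRCLikeNormedField 𝕜] [NormedAddCommGroup E] [NormedSpace ℝ E]
    [NormedSpace 𝕜 E] [NormedAddCommGroup F] [NormedSpace 𝕜 F] {s : Set E} (hs : Convex ℝ s)
    {G : E → F} {G' : E → E →L[𝕜] F} (hG : ∀ x ∈ s, HasFDerivWithinAt G (G' x) s x)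
    (hG' : ∀ x ∈ s, ∀ y ∈ s, G' x (y - x) = 0) {x y : E} (hx : x ∈ s) (hy : y ∈ s) :
    G x = G y := by
  have h := hs.norm_image_sub_le_of_norm_hasFDerivWithin_le
    (fun z hz => (hG z hz).zero_of_forall_apply_sub_eq_zero (hG' z hz)) (fun _ _ => norm_zero.le)
    hx hy
  rw [zero_mul, norm_le_zero_iff, sub_eq_zero] at h
  exact h.symm

namespace Matrix

theorem convex_setOf_posDef {ι : Type*} : Convex ℝ {A : Matrix ι ι ℝ | A.PosDef} := by
  intro A hA B hB a b ha hb hab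
  rcases ha.eq_or_lt with rfl | ha
  · simpa [show b = 1 by linarith] using hB
  · exact (hA.smul ha).add_posSemidef (hB.posSemidef.smul hb)

theorem map_ofReal_re_add_I_smul_map_ofReal_im {m n : Type*} (A : Matrix m n ℂ) :
    (A.map re).map ofReal + I • (A.map im).map ofReal = A := by
  ext i j
  simp [mul_comm I, re_add_im]

theorem IsSymm.apply_eq_zero_of_forall_isSymm_real {ι E : Type*} [AddCommGroup E] [Module ℂ E]
    {A : Matrix ι ι ℂ} (hA : A.IsSymm) (L : Matrix ι ι ℂ →ₗ[ℂ] E)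
    (hL : ∀ u : Matrix ι ι ℝ, u.IsSymm → L (u.map ofReal) = 0) : L A = 0 := by
  rw [← A.map_ofReal_re_add_I_smul_map_ofReal_im, map_add, map_smul, hL _ (hA.map re),
    hL _ (hA.map im), smul_zero, add_zero]

variable {ι : Type*} [Fintype ι]

theorem trace_map_ofReal_mul (A B : Matrix ι ι ℝ) :
    (A.map ofReal * B.map ofReal).trace = ((A * B).trace : ℂ) := by
  simp [trace, mul_apply]

theorem differentiable_trace_mul (A : Matrix ι ι ℂ) :
    Differentiable ℂ fun τ : Matrix ι ι ℂ => (A * τ).trace := by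
  simp only [trace, diag, mul_apply]
  fun_prop

end Matrix

def siegelUpperHalfSpace (ι : Type*) [Fintype ι] : Set (Matrix ι ι ℂ) :=
  {τ | τ.IsSymm ∧ (τ.map im).PosDef}

namespace siegelUpperHalfSpace

variable {ι : Type*} [Fintype ι]

theorem convex : Convex ℝ (siegelUpperHalfSpace ι) := by
  rintro τ ⟨hτ, hτpos⟩ σ ⟨hσ, hσpos⟩ a b ha hb hab
  refine ⟨(hτ.smul a).add (hσ.smul b), ?_⟩
  have him : (a • τ + b • σ).map im = a • τ.map im + b • σ.map im := by ext; simp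
  rw [him]
  exact Matrix.convex_setOf_posDef hτpos hσpos ha hb hab

theorem add_map_ofReal_mem {τ : Matrix ι ι ℂ} (hτ : τ ∈ siegelUpperHalfSpace ι)
    {u : Matrix ι ι ℝ} (hu : u.IsSymm) : τ + u.map ofReal ∈ siegelUpperHalfSpace ι := by
  refine ⟨hτ.1.add (hu.map _), ?_⟩
  convert hτ.2 using 1
  ext; simp

theorem eq_of_differentiableOn_of_forall_add_eq {E : Type*} [NormedAddCommGroup E]
    [NormedSpace ℂ E] {G : Matrix ι ι ℂ → E} (hG : DifferentiableOn ℂ G (siegelUpperHalfSpace ι))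
    (hper : ∀ τ ∈ siegelUpperHalfSpace ι, ∀ u : Matrix ι ι ℝ, u.IsSymm →
      G (τ + u.map ofReal) = G τ)
    {τ σ : Matrix ι ι ℂ} (hτ : τ ∈ siegelUpperHalfSpace ι) (hσ : σ ∈ siegelUpperHalfSpace ι) :
    G τ = G σ := by
  refine convex.eq_of_hasFDerivWithinAt_of_apply_sub_eq_zero
    (fun ρ hρ => (hG ρ hρ).hasFDerivWithinAt) (fun ρ hρ ρ' hρ' => ?_) hτ hσ
  refine (hρ'.1.sub hρ.1).apply_eq_zero_of_forall_isSymm_real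
    (fderivWithin ℂ G (siegelUpperHalfSpace ι) ρ).toLinearMap fun u hu => ?_
  have hsmul : ∀ t : ℝ, t • u.map ofReal = (t • u).map ofReal := fun t => by ext; simp
  exact ((hG ρ hρ).hasFDerivWithinAt.restrictScalars ℝ).apply_eq_zero_of_forall_add_smul_eq
    (fun t => hsmul t ▸ add_map_ofReal_mem hρ (hu.smul t))
    (fun t => hsmul t ▸ hper ρ hρ _ (hu.smul t))

end siegelUpperHalfSpace

theorem holomorphic_translation_character_eq_const_mul_exp_general
    (n : ℕ) (β : Matrix (Fin n) (Fin n) ℝ)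
    (F : Matrix (Fin n) (Fin n) ℂ → ℂ)
    (H : Set (Matrix (Fin n) (Fin n) ℂ))
    (hH : H = {τ | τ.IsSymm ∧
      (Matrix.of fun i j => (τ i j).im : Matrix (Fin n) (Fin n) ℝ).PosDef})
    (hol : DifferentiableOn ℂ F H)
    (per : ∀ τ ∈ H, ∀ u : Matrix (Fin n) (Fin n) ℝ, u.IsSymm →
      F (τ + u.map (fun x => (x : ℂ))) =
        Complex.exp (2 * Real.pi * Complex.I * ((β * u).trace : ℝ)) * F τ) :
    ∃ c : ℂ, ∀ τ ∈ H,
      F τ = c * Complex.exp (2 * Real.pi * Complex.I *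
        ((β.map (fun x => (x : ℂ))) * τ).trace) := by
  change H = siegelUpperHalfSpace (Fin n) at hH
  subst hH
  set G : Matrix (Fin n) (Fin n) ℂ → ℂ :=
    fun τ => F τ * cexp (-(2 * Real.pi * I * (β.map ofReal * τ).trace))
  have hG : DifferentiableOn ℂ G (siegelUpperHalfSpace (Fin n)) :=
    hol.mul
      ((Matrix.differentiable_trace_mul (β.map ofReal)).const_mul _).neg.cexp.differentiableOn
  have hGper : ∀ τ ∈ siegelUpperHalfSpace (Fin n), ∀ u : Matrix (Fin n) (Fin n) ℝ, u.IsSymm →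
      G (τ + u.map ofReal) = G τ := by
    intro τ hτ u hu
    simp only [G, per τ hτ u hu, Matrix.mul_add, Matrix.trace_add, Matrix.trace_map_ofReal_mul]
    rw [mul_add, neg_add, exp_add, exp_neg (_ * ((β * u).trace : ℂ))]
    field_simp
  rcases (siegelUpperHalfSpace (Fin n)).eq_empty_or_nonempty with hempty | ⟨τ₀, hτ₀⟩
  · exact ⟨0, by simp [hempty]⟩
  refine ⟨G τ₀, fun τ hτ => ?_⟩
  rw [← siegelUpperHalfSpace.eq_of_differentiableOn_of_forall_add_eq hG hGper hτ hτ₀, mul_assoc,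
    ← exp_add, neg_add_cancel, exp_zero, mul_one]

/-- A function holomorphic on the Siegel upper half space `𝓗_n`
(inside the space of symmetric complex `n × n` matrices) which transforms under
translation by real symmetric matrices `u` by the character
`u ↦ exp(2πi·tr(βu))` is a constant multiple of `exp(2πi·tr(βτ))`. -/
theorem holomorphic_translation_character_eq_const_mul_exp
    (n : ℕ) (hn : 1 ≤ n) (β : Matrix (Fin n) (Fin n) ℝ) (hβ : β.IsSymm)
    (F : Matrix (Fin n) (Fin n) ℂ → ℂ)
    (H : Set (Matrix (Fin n) (Fin n) ℂ))
    (hH : H = {τ | τ.IsSymm ∧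
      (Matrix.of fun i j => (τ i j).im : Matrix (Fin n) (Fin n) ℝ).PosDef})
    (hol : DifferentiableOn ℂ F H)
    (per : ∀ τ ∈ H, ∀ u : Matrix (Fin n) (Fin n) ℝ, u.IsSymm →
      F (τ + u.map (fun x => (x : ℂ))) =
        Complex.exp (2 * Real.pi * Complex.I * ((β * u).trace : ℝ)) * F τ) :
    ∃ c : ℂ, ∀ τ ∈ H,
      F τ = c * Complex.exp (2 * Real.pi * Complex.I *
        ((β.map (fun x => (x : ℂ))) * τ).trace) :=
  holomorphic_translation_character_eq_const_mul_exp_general n β F H hH hol per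
end

section
/- Let p be a prime and n ≥ 1. Let J be the 2n×2n matrix with block form (0, 1_n; -1_n, 0) and let K be the set of 2n×2n matrices g with entries in ℤ_p such that gᵀJg = λ·J for some unit λ ∈ ℤ_p^×, and such that the lower-left n×n block of g has all entries divisible by p. Let M = diag(p, ..., p, 1, ..., 1) (n entries p followed by n entries 1). Then the double coset K·M·K (the set of all products k₁Mk₂ with k₁, k₂ ∈ K) is equal to the union over all symmetric n×n integer matrices B with entries in {0, 1, ..., p-1} of the left cosets (block matrix (p·1_n, B; 0, 1_n))·K, and these cosets are pairwise disjoint; in particular K·M·K is the disjoint union of exactly p^{n(n+1)/2} left cosets of K. -/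
/-!
All computations take place over `ℤ_p`: `K` is the image of the monoid `Γ₀(p)` of integral
similitudes whose lower-left block lies in `p ℤ_p`, and this monoid is a group because
`g⁻¹ = -λ⁻¹ J gᵀ J`. For `g = (A, B; C, D) ∈ Γ₀(p)` with multiplier `λ`, the relations
`gᵀ J g = λ J` and `g J gᵀ = λ J` give `Aᵀ D = λ + Cᵀ B` and `B Aᵀ = A Bᵀ`, so `X = λ⁻¹ B Aᵀ` is
symmetric and `X D ≡ B (mod p)`. Reducing `X` entrywise to `B₀` with entries in `{0, …, p - 1}`
gives `g M = T_{B₀} k` with `k = (A - B₀ C, p⁻¹ (B - B₀ D); p C, D) ∈ Γ₀(p)`, whose multiplier is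
`λ` because `T_{B₀}` and `M` both have multiplier `p`. Conversely `T_B = (1, B; 0, 1) M`.
If `T_{B₁} K` meets `T_{B₂} K` then `T_{B₁} = T_{B₂} k` for some `k ∈ K`, and comparing blocks
gives `B₁ - B₂ = p k₁₂`, so `B₁ = B₂`. Symmetric matrices with entries in a set `s` are the
functions `Sym2 (Fin n) → s`, which gives the count.
-/

open Matrix IsLocalRing

namespace Matrix

section Blocks

variable {l R : Type*} [DecidableEq l] [CommRing R]

lemma fromBlocks_zero_one_neg_one_zero :
    (fromBlocks 0 1 (-1) 0 : Matrix (l ⊕ l) (l ⊕ l) R) = -J l R := by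
  simp [J, fromBlocks_neg]

def siegelBlock (a : R) (B : Matrix l l R) : Matrix (l ⊕ l) (l ⊕ l) R :=
  fromBlocks (a • 1) B 0 1

lemma map_siegelBlock {S : Type*} [CommRing S] (f : R →+* S) (a : R) (B : Matrix l l R) :
    (siegelBlock a B).map f = siegelBlock (f a) (B.map f) := by
  simp [siegelBlock, fromBlocks_map, Matrix.map_smul' _ _ _ (map_mul f)]

variable [Fintype l]

lemma siegelBlock_mul_siegelBlock (a b : R) (B B' : Matrix l l R) :
    siegelBlock a B * siegelBlock b B' = siegelBlock (a * b) (a • B' + B) := by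
  simp [siegelBlock, fromBlocks_multiply, smul_smul, mul_comm]

lemma siegelBlock_mul_fromBlocks (a : R) (A C D B₀ Y : Matrix l l R) :
    siegelBlock a B₀ * fromBlocks (A - B₀ * C) Y (a • C) D =
      fromBlocks A (B₀ * D + a • Y) C D * siegelBlock a 0 := by
  simp only [siegelBlock, fromBlocks_multiply, fromBlocks_inj]
  refine ⟨?_, ?_, by simp, by simp⟩
  · simp only [Matrix.smul_mul, Matrix.mul_smul, Matrix.one_mul, Matrix.mul_sub, Matrix.mul_one,
      Matrix.mul_zero, add_zero]
    module
  · simp only [Matrix.smul_mul, Matrix.one_mul, Matrix.mul_zero, Matrix.mul_one, zero_add]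
    abel

lemma sub_eq_smul_of_siegelBlock_eq_mul {a : R} {B₁ B₂ : Matrix l l R}
    {k : Matrix (l ⊕ l) (l ⊕ l) R} (h : siegelBlock a B₁ = siegelBlock a B₂ * k) :
    B₁ - B₂ = a • k.toBlocks₁₂ := by
  rw [← fromBlocks_toBlocks k, siegelBlock, siegelBlock, fromBlocks_multiply,
    fromBlocks_inj] at h
  obtain ⟨-, h₁₂, -, h₂₂⟩ := h
  simp only [Matrix.zero_mul, Matrix.one_mul, zero_add] at h₂₂
  rw [h₁₂, ← h₂₂]
  simp

lemma fromBlocks_transpose_mul_J_mul (A B C D : Matrix l l R) :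
    (fromBlocks A B C D)ᵀ * J l R * fromBlocks A B C D =
      fromBlocks (Cᵀ * A - Aᵀ * C) (Cᵀ * B - Aᵀ * D) (Dᵀ * A - Bᵀ * C) (Dᵀ * B - Bᵀ * D) := by
  simp [J, fromBlocks_transpose, fromBlocks_multiply, sub_eq_add_neg, add_comm]

lemma transpose_mul_eq_of_similitude_fromBlocks {A B C D : Matrix l l R} {c : R}
    (h : (fromBlocks A B C D)ᵀ * J l R * fromBlocks A B C D = c • J l R) :
    Aᵀ * D = c • 1 + Cᵀ * B := by
  rw [fromBlocks_transpose_mul_J_mul, J, fromBlocks_smul, fromBlocks_inj] at h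
  linear_combination (norm := module) -h.2.1

lemma siegelBlock_transpose_mul_J_mul (a : R) {B : Matrix l l R} (hB : B.IsSymm) :
    (siegelBlock a B)ᵀ * J l R * siegelBlock a B = a • J l R := by
  rw [siegelBlock, fromBlocks_transpose_mul_J_mul, hB.eq]
  simp [J, fromBlocks_smul]

lemma transpose_map_mul_J_mul_map_iff {S : Type*} [CommRing S] {f : R →+* S}
    (hf : Function.Injective f) (g : Matrix (l ⊕ l) (l ⊕ l) R) (c : R) :
    (g.map f)ᵀ * J l S * g.map f = f c • J l S ↔ gᵀ * J l R * g = c • J l R := by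
  rw [← map_J l f, ← transpose_map, ← Matrix.map_mul, ← Matrix.map_mul,
    ← Matrix.map_smul' _ _ _ (map_mul f), (map_injective hf).eq_iff]

end Blocks

section Similitude

variable {l R : Type*} [Fintype l] [DecidableEq l] [CommRing R]

lemma transpose_mul_mul_eq_of_mul_eq_one {m : Type*} [Fintype m] [DecidableEq m]
    {g h : Matrix m m R} (X : Matrix m m R) (hgh : g * h = 1) : hᵀ * (gᵀ * X * g) * h = X := by
  calc hᵀ * (gᵀ * X * g) * h = (g * h)ᵀ * X * (g * h) := by
        simp only [transpose_mul, Matrix.mul_assoc]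
    _ = X := by simp [hgh]

variable {g : Matrix (l ⊕ l) (l ⊕ l) R} {u : Rˣ}

lemma neg_inv_smul_J_mul_transpose_mul_J_mul_eq_one (hg : gᵀ * J l R * g = (u : R) • J l R) :
    (-(↑u⁻¹ : R) • (J l R * gᵀ * J l R)) * g = 1 := by
  calc (-(↑u⁻¹ : R) • (J l R * gᵀ * J l R)) * g =
        -(↑u⁻¹ : R) • (J l R * (gᵀ * J l R * g)) := by
        simp only [smul_mul, Matrix.mul_assoc]
    _ = 1 := by
        rw [hg, Matrix.mul_smul, J_squared, smul_smul, neg_mul, Units.inv_mul]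
        simp

lemma mul_J_mul_transpose_of_transpose_mul_J_mul (hg : gᵀ * J l R * g = (u : R) • J l R) :
    g * J l R * gᵀ = (u : R) • J l R := by
  have h := mul_eq_one_comm.mp (neg_inv_smul_J_mul_transpose_mul_J_mul_eq_one hg)
  calc g * J l R * gᵀ =
        (-(u : R) • (g * (-(↑u⁻¹ : R) • (J l R * gᵀ * J l R)))) * -J l R := by
        simp [Matrix.mul_assoc, J_squared, smul_smul]
    _ = (u : R) • J l R := by rw [h]; simp

lemma mul_transpose_comm_of_similitude_fromBlocks {A B C D : Matrix l l R}
    (h : (fromBlocks A B C D)ᵀ * J l R * fromBlocks A B C D = (u : R) • J l R) :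
    B * Aᵀ = A * Bᵀ := by
  have h' := fromBlocks_transpose_mul_J_mul Aᵀ Cᵀ Bᵀ Dᵀ
  rw [← fromBlocks_transpose, transpose_transpose,
    mul_J_mul_transpose_of_transpose_mul_J_mul h, J, fromBlocks_smul, fromBlocks_inj] at h'
  simpa [sub_eq_zero, eq_comm] using h'.1

lemma transpose_mul_J_mul_of_mul_eq_one {h : Matrix (l ⊕ l) (l ⊕ l) R}
    (hg : gᵀ * J l R * g = (u : R) • J l R) (hgh : g * h = 1) :
    hᵀ * J l R * h = (↑u⁻¹ : R) • J l R := by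
  have hJ := transpose_mul_mul_eq_of_mul_eq_one (J l R) hgh
  rw [hg, Matrix.mul_smul, Matrix.smul_mul] at hJ
  calc hᵀ * J l R * h = (↑u⁻¹ : R) • (u : R) • (hᵀ * J l R * h) := by
        rw [smul_smul, Units.inv_mul, one_smul]
    _ = (↑u⁻¹ : R) • J l R := by rw [hJ]

lemma transpose_mul_J_mul_of_mul_eq_mul [IsDomain R] {a c : R} (ha : a ≠ 0)
    {T M k : Matrix (l ⊕ l) (l ⊕ l) R} (hT : Tᵀ * J l R * T = a • J l R)
    (hM : Mᵀ * J l R * M = a • J l R) (hg : gᵀ * J l R * g = c • J l R) (h : T * k = g * M) :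
    kᵀ * J l R * k = c • J l R := by
  refine smul_right_injective _ ha ?_
  calc a • (kᵀ * J l R * k) = kᵀ * (Tᵀ * J l R * T) * k := by
        rw [hT, Matrix.mul_smul, Matrix.smul_mul]
    _ = (T * k)ᵀ * J l R * (T * k) := by simp only [transpose_mul, Matrix.mul_assoc]
    _ = Mᵀ * (gᵀ * J l R * g) * M := by rw [h]; simp only [transpose_mul, Matrix.mul_assoc]
    _ = a • c • J l R := by rw [hg, Matrix.mul_smul, Matrix.smul_mul, hM, smul_comm]

end Similitude

section GammaZero

variable {l R : Type*} [Fintype l] [DecidableEq l] [CommRing R]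

-- Mathlib's `J` is the negative of the form `(0, 1; -1, 0)` of the statement; the similitudes
-- are the same for both.
variable (l) in
def gspGammaZero (I : Ideal R) : Submonoid (Matrix (l ⊕ l) (l ⊕ l) R) where
  carrier := {g | (∃ u : Rˣ, gᵀ * J l R * g = (u : R) • J l R) ∧
    ∀ i j, g (Sum.inr i) (Sum.inl j) ∈ I}
  one_mem' := ⟨⟨1, by simp⟩, fun i j => by simp⟩
  mul_mem' := by
    rintro g h ⟨⟨u, hg⟩, hgI⟩ ⟨⟨v, hh⟩, hhI⟩
    refine ⟨⟨u * v, ?_⟩, fun i j => ?_⟩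
    · calc (g * h)ᵀ * J l R * (g * h) = hᵀ * (gᵀ * J l R * g) * h := by
            simp only [transpose_mul, Matrix.mul_assoc]
        _ = ((u * v : Rˣ) : R) • J l R := by
            rw [hg, Matrix.mul_smul, Matrix.smul_mul, hh, smul_smul, Units.val_mul]
    · simp only [mul_apply, Fintype.sum_sum_type]
      exact I.add_mem (I.sum_mem fun k _ => I.mul_mem_right _ (hgI i k))
        (I.sum_mem fun k _ => I.mul_mem_left _ (hhI k j))

variable {I : Ideal R}

lemma exists_mul_eq_one_of_mem_gspGammaZero {g : Matrix (l ⊕ l) (l ⊕ l) R}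
    (hg : g ∈ gspGammaZero l I) : ∃ h ∈ gspGammaZero l I, g * h = 1 := by
  obtain ⟨⟨u, hu⟩, hgI⟩ := hg
  have hgh := mul_eq_one_comm.mp (neg_inv_smul_J_mul_transpose_mul_J_mul_eq_one hu)
  refine ⟨_, ⟨⟨u⁻¹, transpose_mul_J_mul_of_mul_eq_one hu hgh⟩, fun i j => ?_⟩, hgh⟩
  have : (J l R * gᵀ * J l R) (Sum.inr i) (Sum.inl j) = g (Sum.inr j) (Sum.inl i) := by
    simp [J, mul_apply, Fintype.sum_sum_type, one_apply]
  rw [smul_apply, this, smul_eq_mul]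
  exact I.mul_mem_left _ (hgI j i)

lemma siegelBlock_mem_gspGammaZero (u : Rˣ) {B : Matrix l l R} (hB : B.IsSymm) :
    siegelBlock (u : R) B ∈ gspGammaZero l I :=
  ⟨⟨u, siegelBlock_transpose_mul_J_mul _ hB⟩, fun i j => by simp [siegelBlock]⟩

end GammaZero

section SymmetricOver

variable {l α : Type*}

def symmetricOver (s : Set α) : Set (Matrix l l α) := {B | B.IsSymm ∧ ∀ i j, B i j ∈ s}

def symmetricOverEquivSym2 (s : Set α) : symmetricOver (l := l) s ≃ (Sym2 l → s) where
  toFun B := Sym2.lift ⟨fun i j => ⟨B.1 i j, B.2.2 i j⟩,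
    fun i j => Subtype.ext (B.2.1.apply i j).symm⟩
  invFun f := ⟨of fun i j => f s(i, j), IsSymm.ext fun i j => by simp [Sym2.eq_swap],
    fun i j => (f _).2⟩
  left_inv B := by ext; simp
  right_inv f := by ext z; induction z using Sym2.ind; simp

lemma ncard_symmetricOver [Finite l] (s : Set α) :
    (symmetricOver s : Set (Matrix l l α)).ncard = Nat.card s ^ Nat.card (Sym2 l) := by
  rw [← Nat.card_coe_set_eq, Nat.card_congr (symmetricOverEquivSym2 s), Nat.card_fun]

lemma ncard_symmetricOver_Ico (p n : ℕ) :
    (symmetricOver (Set.Ico 0 (p : ℤ)) : Set (Matrix (Fin n) (Fin n) ℤ)).ncard =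
      p ^ (n * (n + 1) / 2) := by
  rw [ncard_symmetricOver, Nat.card_eq_fintype_card (α := Sym2 _), Sym2.card, Fintype.card_fin,
    Nat.choose_two_right, Nat.add_sub_cancel, mul_comm]
  simp

end SymmetricOver

end Matrix

namespace PadicInt

variable {p : ℕ} [Fact p.Prime]

lemma norm_le_inv_p_iff_mem_maximalIdeal (x : ℤ_[p]) :
    ‖x‖ ≤ (p : ℝ)⁻¹ ↔ x ∈ maximalIdeal ℤ_[p] := by
  simpa [maximalIdeal_eq_span_p] using norm_le_pow_iff_mem_span_pow x 1

lemma exists_eq_p_smul_of_forall_mem_maximalIdeal {m o : Type*} {X : Matrix m o ℤ_[p]}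
    (h : ∀ i j, X i j ∈ maximalIdeal ℤ_[p]) : ∃ Y, X = (p : ℤ_[p]) • Y := by
  simp only [maximalIdeal_eq_span_p, Ideal.mem_span_singleton'] at h
  choose Y hY using h
  exact ⟨of Y, by ext i j; simp [← hY, mul_comm]⟩

lemma exists_symmetricOver_Ico_add_p_smul {l : Type*} {X : Matrix l l ℤ_[p]} (hX : X.IsSymm) :
    ∃ B ∈ symmetricOver (Set.Ico 0 (p : ℤ)), ∃ W, X = B.map (↑) + (p : ℤ_[p]) • W := by
  set B : Matrix l l ℤ := X.map fun x => (x.zmodRepr : ℤ)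
  obtain ⟨W, hW⟩ := exists_eq_p_smul_of_forall_mem_maximalIdeal (X := X - B.map (↑))
    fun i j => by simpa [B] using sub_zmodRepr_mem (X i j)
  refine ⟨B, ⟨hX.map _, fun i j => ?_⟩, W, by rw [← hW, add_sub_cancel]⟩
  simpa [B] using zmodRepr_lt_p (X i j)

variable {l : Type*} [Fintype l] [DecidableEq l]

lemma exists_mul_siegelBlock_eq_siegelBlock_mul {G : Matrix (l ⊕ l) (l ⊕ l) ℤ_[p]}
    (hG : G ∈ gspGammaZero l (maximalIdeal ℤ_[p])) :
    ∃ B ∈ symmetricOver (Set.Ico 0 (p : ℤ)), ∃ k ∈ gspGammaZero l (maximalIdeal ℤ_[p]),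
      G * siegelBlock (p : ℤ_[p]) 0 = siegelBlock (p : ℤ_[p]) (B.map (↑)) * k := by
  obtain ⟨⟨u, hu⟩, hC⟩ := hG
  obtain ⟨A, B, C, D, rfl⟩ : ∃ A B C D, G = fromBlocks A B C D :=
    ⟨_, _, _, _, (fromBlocks_toBlocks G).symm⟩
  have hAD := transpose_mul_eq_of_similitude_fromBlocks hu
  have hBA := mul_transpose_comm_of_similitude_fromBlocks hu
  obtain ⟨C, rfl⟩ := exists_eq_p_smul_of_forall_mem_maximalIdeal (X := C) (by simpa using hC)
  set X := (↑u⁻¹ : ℤ_[p]) • (B * Aᵀ)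
  have hX : X.IsSymm := by simp [X, IsSymm, transpose_smul, transpose_mul, hBA]
  have hXD : X * D = B + (p : ℤ_[p]) • ((↑u⁻¹ : ℤ_[p]) • (B * Cᵀ * B)) := by
    calc X * D = (↑u⁻¹ : ℤ_[p]) • (B * (Aᵀ * D)) := by simp [X, Matrix.mul_assoc]
      _ = _ := by
        rw [hAD, Matrix.mul_add, transpose_smul, Matrix.smul_mul, Matrix.mul_smul,
          Matrix.mul_smul, Matrix.mul_one, smul_add, smul_smul, Units.inv_mul, one_smul,
          smul_comm, Matrix.mul_assoc]
  obtain ⟨B₀, hB₀, W, hW⟩ := exists_symmetricOver_Ico_add_p_smul hX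
  have hB : B = B₀.map (↑) * D + (p : ℤ_[p]) • (W * D - (↑u⁻¹ : ℤ_[p]) • (B * Cᵀ * B)) := by
    calc B = X * D - (p : ℤ_[p]) • ((↑u⁻¹ : ℤ_[p]) • (B * Cᵀ * B)) := by rw [hXD]; abel
      _ = _ := by rw [hW, Matrix.add_mul, Matrix.smul_mul, smul_sub]; abel
  have hk := siegelBlock_mul_fromBlocks (p : ℤ_[p]) A ((p : ℤ_[p]) • C) D (B₀.map (↑))
    (W * D - (↑u⁻¹ : ℤ_[p]) • (B * Cᵀ * B))
  rw [← hB] at hk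
  refine ⟨B₀, hB₀, _, ⟨⟨u, ?_⟩, fun i j => ?_⟩, hk.symm⟩
  · exact transpose_mul_J_mul_of_mul_eq_mul (by simpa using (Fact.out : p.Prime).ne_zero)
      (siegelBlock_transpose_mul_J_mul _ (hB₀.1.map _))
      (siegelBlock_transpose_mul_J_mul _ isSymm_zero) hu hk
  · rw [fromBlocks_apply₂₁, Matrix.smul_apply, smul_eq_mul]
    exact (maximalIdeal ℤ_[p]).mul_mem_left _ (hC i j)

lemma eq_of_siegelBlock_mul_eq_siegelBlock_mul {B₁ B₂ : Matrix l l ℤ}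
    (hB₁ : B₁ ∈ symmetricOver (Set.Ico 0 (p : ℤ))) (hB₂ : B₂ ∈ symmetricOver (Set.Ico 0 (p : ℤ)))
    {k₁ k₂ : Matrix (l ⊕ l) (l ⊕ l) ℤ_[p]} (hk₁ : k₁ ∈ gspGammaZero l (maximalIdeal ℤ_[p]))
    (h : siegelBlock (p : ℤ_[p]) (B₁.map (↑)) * k₁ = siegelBlock (p : ℤ_[p]) (B₂.map (↑)) * k₂) :
    B₁ = B₂ := by
  obtain ⟨k, -, hk⟩ := exists_mul_eq_one_of_mem_gspGammaZero hk₁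
  have hsub := sub_eq_smul_of_siegelBlock_eq_mul (k := k₂ * k) <| by
    rw [← Matrix.mul_assoc, ← h, Matrix.mul_assoc, hk, Matrix.mul_one]
  ext i j
  have hdvd : (p : ℤ) ∣ B₁ i j - B₂ i j := by
    rw [← norm_int_lt_one_iff_dvd, norm_lt_one_iff_dvd]
    exact ⟨_, by simpa using congrFun (congrFun hsub i) j⟩
  have h₁ := hB₁.2 i j
  have h₂ := hB₂.2 i j
  simp only [Set.mem_Ico] at h₁ h₂
  have := Int.eq_zero_of_abs_lt_dvd hdvd (abs_lt.2 ⟨by omega, by omega⟩)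
  omega

lemma mapMatrix_siegelBlock_intCast (B : Matrix l l ℤ) :
    (Coe.ringHom (p := p)).mapMatrix (siegelBlock (p : ℤ_[p]) (B.map (↑))) =
      fromBlocks ((p : ℚ_[p]) • 1) (B.map (↑)) 0 1 := by
  rw [RingHom.mapMatrix_apply, map_siegelBlock, Matrix.map_map]
  simp [siegelBlock, Function.comp_def]

variable (p l) in
lemma coe_map_gspGammaZero :
    ((gspGammaZero l (maximalIdeal ℤ_[p])).map (Coe.ringHom (p := p)).mapMatrix :
      Set (Matrix (l ⊕ l) (l ⊕ l) ℚ_[p])) =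
      {g | (∀ i j, ‖g i j‖ ≤ 1) ∧
        (∃ lam : ℚ_[p], ‖lam‖ = 1 ∧
          gᵀ * fromBlocks 0 1 (-1) 0 * g = lam • fromBlocks 0 1 (-1) 0) ∧
        ∀ i j, ‖g (Sum.inr i) (Sum.inl j)‖ ≤ (p : ℝ)⁻¹} := by
  ext g
  simp only [fromBlocks_zero_one_neg_one_zero, Matrix.mul_neg, Matrix.neg_mul, smul_neg, neg_inj]
  constructor
  · rintro ⟨G, ⟨⟨u, hu⟩, hC⟩, rfl⟩
    exact ⟨fun i j => norm_le_one (G i j),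
      ⟨u, isUnit_iff.1 u.isUnit, (transpose_map_mul_J_mul_map_iff Subtype.coe_injective G u).2 hu⟩,
      fun i j => (norm_le_inv_p_iff_mem_maximalIdeal _).2 (hC i j)⟩
  · rintro ⟨hint, ⟨lam, hlam, hsim⟩, hC⟩
    obtain ⟨lam, rfl⟩ : ∃ x : ℤ_[p], Coe.ringHom x = lam := ⟨⟨lam, hlam.le⟩, rfl⟩
    obtain ⟨G, rfl⟩ : ∃ G : Matrix (l ⊕ l) (l ⊕ l) ℤ_[p], G.map Coe.ringHom = g :=
      ⟨of fun i j => ⟨g i j, hint i j⟩, by ext; rfl⟩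
    refine ⟨G, ⟨⟨(isUnit_iff.2 hlam).unit,
      (transpose_map_mul_J_mul_map_iff Subtype.coe_injective _ _).1 hsim⟩,
      fun i j => (norm_le_inv_p_iff_mem_maximalIdeal _).1 (hC i j)⟩, rfl⟩

end PadicInt

open PadicInt in
theorem heckeOperator_coset_decomposition_general
    (p : ℕ) [Fact p.Prime] (n : ℕ)
    (J : Matrix (Fin n ⊕ Fin n) (Fin n ⊕ Fin n) ℚ_[p])
    (hJ : J = Matrix.fromBlocks 0 1 (-1) 0)
    (K : Set (Matrix (Fin n ⊕ Fin n) (Fin n ⊕ Fin n) ℚ_[p]))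
    (hK : K = {g | (∀ i j, ‖g i j‖ ≤ 1) ∧
        (∃ lam : ℚ_[p], ‖lam‖ = 1 ∧ gᵀ * J * g = lam • J) ∧
        (∀ i j : Fin n, ‖g (Sum.inr i) (Sum.inl j)‖ ≤ ((p : ℝ))⁻¹)})
    (M : Matrix (Fin n ⊕ Fin n) (Fin n ⊕ Fin n) ℚ_[p])
    (hM : M = Matrix.fromBlocks ((p : ℚ_[p]) • 1) 0 0 1)
    (S : Set (Matrix (Fin n) (Fin n) ℤ))
    (hS : S = {B | Bᵀ = B ∧ ∀ i j, 0 ≤ B i j ∧ B i j < (p : ℤ)})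
    (T : Matrix (Fin n) (Fin n) ℤ → Matrix (Fin n ⊕ Fin n) (Fin n ⊕ Fin n) ℚ_[p])
    (hT : T = fun B => Matrix.fromBlocks ((p : ℚ_[p]) • 1)
        (B.map fun x => (x : ℚ_[p])) 0 1) :
    ({x | ∃ k₁ ∈ K, ∃ k₂ ∈ K, x = k₁ * M * k₂} = ⋃ B ∈ S, {x | ∃ k ∈ K, x = T B * k}) ∧
    (∀ B₁ ∈ S, ∀ B₂ ∈ S, B₁ ≠ B₂ →
      Disjoint {x | ∃ k ∈ K, x = T B₁ * k} {x | ∃ k ∈ K, x = T B₂ * k}) ∧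
    S.ncard = p ^ (n * (n + 1) / 2) := by
  subst hJ hM hT
  obtain rfl : S = symmetricOver (Set.Ico 0 (p : ℤ)) := hS
  rw [← coe_map_gspGammaZero] at hK
  subst hK
  have hM := mapMatrix_siegelBlock_intCast (p := p) (0 : Matrix (Fin n) (Fin n) ℤ)
  simp only [Matrix.map_zero, Int.cast_zero] at hM
  simp only [← hM, ← mapMatrix_siegelBlock_intCast]
  refine ⟨?_, ?_, ncard_symmetricOver_Ico p n⟩
  · ext x
    simp only [Set.mem_ofPred_eq, Set.mem_iUnion, SetLike.mem_coe]
    constructor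
    · rintro ⟨_, ⟨G, hG, rfl⟩, k₂, hk₂, rfl⟩
      obtain ⟨B, hB, k, hk, hGk⟩ := exists_mul_siegelBlock_eq_siegelBlock_mul hG
      exact ⟨B, hB, _ * k₂, mul_mem (Submonoid.mem_map_of_mem _ hk) hk₂,
        by rw [← map_mul, hGk, map_mul, mul_assoc]⟩
    · rintro ⟨B, hB, k, hk, rfl⟩
      refine ⟨_, Submonoid.mem_map_of_mem _ (siegelBlock_mem_gspGammaZero 1
        (hB.1.map ((↑) : ℤ → ℤ_[p]))), k, hk, ?_⟩
      rw [← map_mul, siegelBlock_mul_siegelBlock]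
      simp
  · rintro B₁ hB₁ B₂ hB₂ hne
    refine Set.disjoint_left.2 ?_
    rintro _ ⟨_, ⟨k₁, hk₁, rfl⟩, rfl⟩ ⟨_, ⟨k₂, -, rfl⟩, h⟩
    rw [← map_mul, ← map_mul] at h
    exact hne (eq_of_siegelBlock_mul_eq_siegelBlock_mul hB₁ hB₂ hk₁
      (map_injective Subtype.coe_injective h))

/-- Left coset decomposition of the Hecke double coset `K·M·K` at `p`,
where `K` is the local Levi/congruence subgroup of `GSp_n(ℚ_p)` (integral entries,
unit similitude multiplier, lower-left block divisible by `p`) and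
`M = diag(p,…,p,1,…,1)`: it is the disjoint union over symmetric integer matrices `B`
with entries in `{0,…,p-1}` of the cosets `(p·1, B; 0, 1)·K`, and there are exactly
`p^(n(n+1)/2)` of them. -/
theorem heckeOperator_coset_decomposition
    (p : ℕ) [Fact p.Prime] (n : ℕ) (hn : 1 ≤ n)
    (J : Matrix (Fin n ⊕ Fin n) (Fin n ⊕ Fin n) ℚ_[p])
    (hJ : J = Matrix.fromBlocks 0 1 (-1) 0)
    (K : Set (Matrix (Fin n ⊕ Fin n) (Fin n ⊕ Fin n) ℚ_[p]))
    (hK : K = {g | (∀ i j, ‖g i j‖ ≤ 1) ∧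
        (∃ lam : ℚ_[p], ‖lam‖ = 1 ∧ gᵀ * J * g = lam • J) ∧
        (∀ i j : Fin n, ‖g (Sum.inr i) (Sum.inl j)‖ ≤ ((p : ℝ))⁻¹)})
    (M : Matrix (Fin n ⊕ Fin n) (Fin n ⊕ Fin n) ℚ_[p])
    (hM : M = Matrix.fromBlocks ((p : ℚ_[p]) • 1) 0 0 1)
    (S : Set (Matrix (Fin n) (Fin n) ℤ))
    (hS : S = {B | Bᵀ = B ∧ ∀ i j, 0 ≤ B i j ∧ B i j < (p : ℤ)})
    (T : Matrix (Fin n) (Fin n) ℤ → Matrix (Fin n ⊕ Fin n) (Fin n ⊕ Fin n) ℚ_[p])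
    (hT : T = fun B => Matrix.fromBlocks ((p : ℚ_[p]) • 1)
        (B.map fun x => (x : ℚ_[p])) 0 1) :
    ({x | ∃ k₁ ∈ K, ∃ k₂ ∈ K, x = k₁ * M * k₂} = ⋃ B ∈ S, {x | ∃ k ∈ K, x = T B * k}) ∧
    (∀ B₁ ∈ S, ∀ B₂ ∈ S, B₁ ≠ B₂ →
      Disjoint {x | ∃ k ∈ K, x = T B₁ * k} {x | ∃ k ∈ K, x = T B₂ * k}) ∧
    S.ncard = p ^ (n * (n + 1) / 2) :=
  heckeOperator_coset_decomposition_general p n J hJ K hK M hM S hS T hT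
end
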